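/- Let M be a monoid. (i) If M admits a robust monoid Markov language over a finite alphabet A that represents a semigroup generating set for M (i.e., φ* is surjective on nonempty words), then M admits a robust semigroup Markov language over A. (ii) If M admits a robust monoid Markov language over a finite alphabet B representing a monoid generating set for M, then M admits a robust semigroup Markov language over the alphabet B ∪ {1} obtained by adjoining one new letter 1 with φ(1) = 1_M. -/

import Mathlib

open Function

/-- A language is regular if it is accepted by a deterministic finite automaton
with a finite state set. -/
def RegularLang {A : Type} (L : Language A) : Prop :=
  ∃ (Q : Type) (_ : Fintype Q) (M : DFA A Q), M.accepts = L

/-- The product of a nonempty word under the letter-assignment `φ`; the empty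
word is sent to `none`. This is the induced map `φ⁺` on nonempty words. -/
def prodPlus {A S : Type} [Semigroup S] (φ : A → S) : List A → Option S
  | [] => none
  | a :: w => some (w.foldl (fun s b => s * φ b) (φ a))

/-- The induced monoid homomorphism `φ*` from the free monoid of words. -/
def monProd {A M : Type} [Monoid M] (φ : A → M) (w : List A) : M :=
  (w.map φ).prod

/-- A semigroup Markov language for `S` over `A` (with respect to `φ`): a regular,
`+`-prefix-closed language of nonempty words mapping bijectively onto `S` under `φ⁺`. -/
structure IsSgMarkovLang {A S : Type} [Semigroup S] (φ : A → S) (L : Language A) : Prop where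
  regular : RegularLang L
  not_empty_mem : [] ∉ L
  plus_prefix_closed : ∀ u v : List A, u ≠ [] → v ≠ [] → u ++ v ∈ L → u ∈ L
  unique_rep : ∀ s : S, ∃! w : List A, w ∈ L ∧ prodPlus φ w = some s

/-- A robust semigroup Markov language: additionally every word of `L` has minimal
length among (nonempty) words representing the same element. -/
structure IsRobustSgMarkovLang {A S : Type} [Semigroup S] (φ : A → S) (L : Language A)
    extends IsSgMarkovLang φ L : Prop where
  min_length : ∀ w ∈ L, ∀ v : List A, prodPlus φ v = prodPlus φ w → w.length ≤ v.length

/-- A monoid Markov language for `M` over `A` (with respect to `φ`): a regular,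
prefix-closed language mapping bijectively onto `M` under `φ*`. -/
structure IsMonMarkovLang {A M : Type} [Monoid M] (φ : A → M) (L : Language A) : Prop where
  regular : RegularLang L
  prefix_closed : ∀ u v : List A, u ++ v ∈ L → u ∈ L
  unique_rep : ∀ m : M, ∃! w : List A, w ∈ L ∧ monProd φ w = m

/-- A robust monoid Markov language: additionally every word of `L` has minimal
length among words representing the same element. -/
structure IsRobustMonMarkovLang {A M : Type} [Monoid M] (φ : A → M) (L : Language A)
    extends IsMonMarkovLang φ L : Prop where
  min_length : ∀ w ∈ L, ∀ v : List A, monProd φ v = monProd φ w → w.length ≤ v.length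

/-- `S` is Markov as a semigroup. -/
def SgMarkov (S : Type) [Semigroup S] : Prop :=
  ∃ (A : Type) (_ : Fintype A) (φ : A → S),
    (∀ s : S, ∃ w : List A, prodPlus φ w = some s) ∧
    ∃ L : Language A, IsSgMarkovLang φ L

/-- `S` is robustly Markov (as a semigroup) with respect to some alphabet. -/
def SgRobustlyMarkov (S : Type) [Semigroup S] : Prop :=
  ∃ (A : Type) (_ : Fintype A) (φ : A → S),
    (∀ s : S, ∃ w : List A, prodPlus φ w = some s) ∧
    ∃ L : Language A, IsRobustSgMarkovLang φ L

/-- `S` is strongly Markov (as a semigroup). -/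
def SgStronglyMarkov (S : Type) [Semigroup S] : Prop :=
  ∀ (A : Type) [Fintype A] (φ : A → S),
    (∀ s : S, ∃ w : List A, prodPlus φ w = some s) →
    ∃ L : Language A, IsRobustSgMarkovLang φ L

/-- `M` is Markov as a monoid. -/
def MonMarkov (M : Type) [Monoid M] : Prop :=
  ∃ (A : Type) (_ : Fintype A) (φ : A → M),
    Surjective (monProd φ) ∧ ∃ L : Language A, IsMonMarkovLang φ L

/-- `M` is robustly Markov (as a monoid) with respect to some alphabet. -/
def MonRobustlyMarkov (M : Type) [Monoid M] : Prop :=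
  ∃ (A : Type) (_ : Fintype A) (φ : A → M),
    Surjective (monProd φ) ∧ ∃ L : Language A, IsRobustMonMarkovLang φ L

/-- `M` is strongly Markov (as a monoid). -/
def MonStronglyMarkov (M : Type) [Monoid M] : Prop :=
  ∀ (A : Type) [Fintype A] (φ : A → M),
    Surjective (monProd φ) →
    ∃ L : Language A, IsRobustMonMarkovLang φ L

/-!
In a robust monoid Markov language `L` the identity is represented only by the empty word,
which a semigroup language may not contain. Replace it by a shortest nonempty word `w₀`
representing the identity; replacing all but the last letter of such a word by its
representative in `L` keeps it shortest and makes its proper prefixes lie in `L`, so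
`L - 1 + {w₀}` is still `+`-prefix-closed. For (ii), `L` read over `B ∪ {1}` stays robust
because deleting the letters `1` never lengthens a word, and the letter `1` alone represents
the identity.
-/

namespace Language

variable {α β : Type*}

theorem mem_map {f : α → β} {l : Language α} {x : List β} :
    x ∈ map f l ↔ ∃ y ∈ l, y.map f = x :=
  Iff.rfl

theorem IsRegular.sub {l m : Language α} (hl : l.IsRegular) (hm : m.IsRegular) :
    (l - m).IsRegular :=
  hl.inf hm.compl

theorem isRegular_singleton (w : List α) : ({w} : Language α).IsRegular := by
  refine IsRegular.of_finite_range_leftQuotient <|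
    ((w.tails.finite_toSet.image fun t => ({t} : Language α)).insert 0).subset ?_
  rintro _ ⟨x, rfl⟩
  by_cases h : ∃ y, x ++ y = w
  · obtain ⟨y, rfl⟩ := h
    refine Or.inr ⟨y, (List.mem_tails _ _).2 (List.suffix_append x y), ?_⟩
    ext z
    exact (List.append_cancel_left_eq x z y).symm.to_iff
  · left
    ext z
    exact iff_of_false (fun hz => h ⟨z, hz⟩) id

theorem leftQuotient_map_map {f : α → β} (hf : Injective f) (l : Language α) (x : List α) :
    (map f l).leftQuotient (x.map f) = map f (l.leftQuotient x) := by
  ext y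
  simp only [mem_leftQuotient, mem_map, List.map_eq_append_iff,
    (List.map_injective_iff.2 hf).eq_iff]
  constructor
  · rintro ⟨_, hz, x', y', rfl, rfl, rfl⟩
    exact ⟨y', hz, rfl⟩
  · rintro ⟨y', hy', rfl⟩
    exact ⟨x ++ y', hy', x, y', rfl, rfl, rfl⟩

theorem leftQuotient_map_of_notMem_range {f : α → β} (l : Language α) {x : List β}
    (hx : x ∉ Set.range (List.map f)) : (map f l).leftQuotient x = 0 := by
  ext y
  simp only [mem_leftQuotient, mem_map, List.map_eq_append_iff]
  refine iff_of_false ?_ (notMem_zero y)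
  rintro ⟨_, -, x', -, -, rfl, -⟩
  exact hx ⟨x', rfl⟩

theorem IsRegular.map_of_injective {f : α → β} (hf : Injective f) {l : Language α}
    (hl : l.IsRegular) : (map f l).IsRegular := by
  refine IsRegular.of_finite_range_leftQuotient <|
    ((hl.finite_range_leftQuotient.image (map f)).insert 0).subset ?_
  rintro _ ⟨x, rfl⟩
  by_cases hx : x ∈ Set.range (List.map f)
  · obtain ⟨x', rfl⟩ := hx
    exact Or.inr ⟨l.leftQuotient x', ⟨x', rfl⟩, (leftQuotient_map_map hf l x').symm⟩
  · exact Or.inl (leftQuotient_map_of_notMem_range l hx)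

end Language

section MarkovLanguages

variable {A B M : Type} [Monoid M] {φ : A → M}

theorem monProd_nil (φ : A → M) : monProd φ [] = 1 :=
  List.prod_nil

theorem monProd_append (φ : A → M) (u v : List A) :
    monProd φ (u ++ v) = monProd φ u * monProd φ v := by
  simp [monProd]

theorem foldl_mul_eq_mul_monProd (φ : A → M) (x : M) (w : List A) :
    w.foldl (fun s b => s * φ b) x = x * monProd φ w := by
  induction w generalizing x with
  | nil => simp [monProd]
  | cons a w ih => simp [monProd, ih, mul_assoc]

theorem prodPlus_eq_some_iff {w : List A} {m : M} :
    prodPlus φ w = some m ↔ w ≠ [] ∧ monProd φ w = m := by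
  cases w with
  | nil => simp [prodPlus]
  | cons a w => simp [prodPlus, foldl_mul_eq_mul_monProd, monProd]

theorem prodPlus_eq_prodPlus_iff {v w : List A} (hw : w ≠ []) :
    prodPlus φ v = prodPlus φ w ↔ v ≠ [] ∧ monProd φ v = monProd φ w := by
  rw [(prodPlus_eq_some_iff.2 ⟨hw, rfl⟩ : prodPlus φ w = _), prodPlus_eq_some_iff]

theorem monProd_map_some (φ : B → M) (u : List B) :
    monProd (fun x : Option B => Option.elim x 1 φ) (u.map some) = monProd φ u := by
  simp [monProd, Function.comp_def]

theorem monProd_optionElim (φ : B → M) (v : List (Option B)) :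
    monProd (fun x : Option B => Option.elim x 1 φ) v = monProd φ v.reduceOption := by
  induction v with
  | nil => rfl
  | cons x v ih => cases x <;> simp_all [monProd, List.reduceOption_cons_of_some]

theorem exists_shortest_ne_nil_monProd_eq_one (h : ∃ v, v ≠ [] ∧ monProd φ v = 1) :
    ∃ v, (v ≠ [] ∧ monProd φ v = 1) ∧
      ∀ v', v' ≠ [] → monProd φ v' = 1 → v.length ≤ v'.length := by
  obtain ⟨v, hv, hmin⟩ := (measure (List.length (α := A))).wf.has_min _ h
  exact ⟨v, hv, fun v' hv' h1 => not_lt.1 (hmin v' ⟨hv', h1⟩)⟩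

namespace IsRobustMonMarkovLang

variable {L : Language A}

theorem eq_nil_of_monProd_eq_one (hL : IsRobustMonMarkovLang φ L) {w : List A} (hw : w ∈ L)
    (h1 : monProd φ w = 1) : w = [] :=
  List.eq_nil_of_length_eq_zero <| Nat.le_zero.1 <|
    hL.min_length w hw [] (by rw [monProd_nil, h1])

theorem exists_dropLast_mem (hL : IsRobustMonMarkovLang φ L) {v : List A} (hv : v ≠ []) :
    ∃ w, w ≠ [] ∧ monProd φ w = monProd φ v ∧ w.length ≤ v.length ∧ w.dropLast ∈ L := by
  obtain ⟨u, ⟨huL, hu⟩, -⟩ := hL.unique_rep (monProd φ v.dropLast)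
  have hlen := hL.min_length u huL v.dropLast hu.symm
  refine ⟨u ++ [v.getLast hv], by simp, ?_, ?_, by rwa [List.dropLast_concat]⟩
  · rw [monProd_append, hu, ← monProd_append, List.dropLast_append_getLast]
  · rw [List.length_dropLast] at hlen
    have := List.length_pos_of_ne_nil hv
    simp only [List.length_append, List.length_singleton]
    omega

theorem isRobustSgMarkovLang_sub_one_add (hL : IsRobustMonMarkovLang φ L) {w₀ : List A}
    (hw₀ : w₀ ≠ []) (h1 : monProd φ w₀ = 1)
    (hmin : ∀ v, v ≠ [] → monProd φ v = 1 → w₀.length ≤ v.length) (hpre : w₀.dropLast ∈ L) :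
    IsRobustSgMarkovLang φ (L - 1 + {w₀}) := by
  have ne_nil : ∀ w ∈ L - 1 + {w₀}, w ≠ [] := by
    rintro w (⟨-, hw⟩ | rfl)
    exacts [hw, hw₀]
  refine ⟨⟨(Language.IsRegular.sub hL.regular (Language.isRegular_singleton [])).add
    (Language.isRegular_singleton w₀), fun h => ne_nil [] h rfl, ?_, ?_⟩, ?_⟩
  · rintro u v hu hv (⟨huv, -⟩ | huv)
    · exact Or.inl ⟨hL.prefix_closed u v huv, hu⟩
    · refine Or.inl ⟨hL.prefix_closed u v.dropLast ?_, hu⟩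
      rwa [← List.dropLast_append_of_ne_nil hv, huv]
  · intro s
    simp only [prodPlus_eq_some_iff]
    by_cases hs : s = 1
    · subst hs
      refine ⟨w₀, ⟨Or.inr rfl, hw₀, h1⟩, ?_⟩
      rintro w ⟨⟨hwL, hw⟩ | rfl, -, hw1⟩
      · exact absurd (hL.eq_nil_of_monProd_eq_one hwL hw1) hw
      · rfl
    · obtain ⟨z, ⟨hzL, hz⟩, hzu⟩ := hL.unique_rep s
      have hz₀ : z ≠ [] := by
        rintro rfl
        exact hs (hz ▸ monProd_nil φ)
      refine ⟨z, ⟨Or.inl ⟨hzL, hz₀⟩, hz₀, hz⟩, ?_⟩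
      rintro w ⟨⟨hwL, -⟩ | rfl, -, hw⟩
      · exact hzu w ⟨hwL, hw⟩
      · exact absurd (hw ▸ h1) hs
  · intro w hw v hvw
    obtain ⟨hv, hvw⟩ := (prodPlus_eq_prodPlus_iff (ne_nil w hw)).1 hvw
    rcases hw with ⟨hwL, -⟩ | rfl
    · exact hL.min_length w hwL v hvw
    · exact hmin v hv (hvw.trans h1)

theorem exists_isRobustSgMarkovLang (hL : IsRobustMonMarkovLang φ L)
    (h : ∃ v, v ≠ [] ∧ monProd φ v = 1) :
    ∃ K : Language A, IsRobustSgMarkovLang φ K := by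
  obtain ⟨v, ⟨hv, hv1⟩, hmin⟩ := exists_shortest_ne_nil_monProd_eq_one h
  obtain ⟨w₀, hw₀, hw₀v, hlen, hpre⟩ := hL.exists_dropLast_mem hv
  refine ⟨_, hL.isRobustSgMarkovLang_sub_one_add hw₀ (hw₀v.trans hv1) ?_ hpre⟩
  exact fun v' hv' h1 => hlen.trans (hmin v' hv' h1)

theorem map_some {φ : B → M} {L : Language B} (hL : IsRobustMonMarkovLang φ L) :
    IsRobustMonMarkovLang (fun x : Option B => Option.elim x 1 φ) (Language.map some L) := by
  refine ⟨⟨Language.IsRegular.map_of_injective (Option.some_injective B) hL.regular, ?_, ?_⟩, ?_⟩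
  · rintro u v ⟨l, hl, huv⟩
    obtain ⟨l₁, l₂, rfl, rfl, -⟩ := List.map_eq_append_iff.1 huv
    exact ⟨l₁, hL.prefix_closed l₁ l₂ hl, rfl⟩
  · intro m
    obtain ⟨z, ⟨hzL, hz⟩, hzu⟩ := hL.unique_rep m
    refine ⟨z.map some, ⟨⟨z, hzL, rfl⟩, (monProd_map_some φ z).trans hz⟩, ?_⟩
    rintro _ ⟨⟨l, hl, rfl⟩, hlm⟩
    rw [hzu l ⟨hl, (monProd_map_some φ l).symm.trans hlm⟩]
  · rintro _ ⟨l, hl, rfl⟩ v hv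
    rw [monProd_map_some, monProd_optionElim] at hv
    rw [List.length_map]
    exact (hL.min_length l hl _ hv).trans (List.reduceOption_length_le v)

end IsRobustMonMarkovLang

end MarkovLanguages

/-- (i) A robust monoid Markov language over an alphabet representing a semigroup
generating set yields a robust semigroup Markov language over the same alphabet.
(ii) A robust monoid Markov language over an alphabet `B` representing a monoid
generating set yields a robust semigroup Markov language over `B` with one new
letter representing the identity. -/
theorem stmt3 {M : Type} [Monoid M] :
    (∀ (A : Type) [Fintype A] (φ : A → M),
      (∀ m : M, ∃ w : List A, prodPlus φ w = some m) →
      (∃ L : Language A, IsRobustMonMarkovLang φ L) →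
      ∃ K : Language A, IsRobustSgMarkovLang φ K) ∧
    (∀ (B : Type) [Fintype B] (φ : B → M),
      Surjective (monProd φ) →
      (∃ L : Language B, IsRobustMonMarkovLang φ L) →
      ∃ K : Language (Option B),
        IsRobustSgMarkovLang (fun x : Option B => Option.elim x 1 φ) K) := by
  refine ⟨fun A _ φ hgen ⟨L, hL⟩ => ?_, fun B _ φ _ ⟨L, hL⟩ => ?_⟩
  · obtain ⟨v, hv⟩ := hgen 1
    exact hL.exists_isRobustSgMarkovLang ⟨v, prodPlus_eq_some_iff.1 hv⟩
  · exact hL.map_some.exists_isRobustSgMarkovLang ⟨[none], List.cons_ne_nil _ _, mul_one 1⟩
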